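/- arXiv:2502.03641 — 5 statements merged into one kernel-verified Lean document; each statement's English description precedes it below -/
import Mathlib

section
/- (Example: linear demands with shifts, monotonically good case.) Let 0 < a_1 < a_2 and c_1, c_2 ≥ 0, and let I ⊆ (0,∞) be an open interval containing [a_1/2, a_2/2] on which D_1(p) := a_1 − p + c_1/p and D_2(p) := a_2 − p + c_2/p are both positive. Then R_i(p) := p·D_i(p) = a_i·p − p² + c_i satisfies R_i''(p) = −2 < 0 with monopoly prices a_i/2, so with (L,H) = (1,2) this is a binary monopoly model. If c_1 − c_2 ≥ (a_2 − a_1)·a_2/2, then for every α ∈ (0,1] the value function W^α is convex on [0,1]. -/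
/-!
The first-order condition `(1 - μ) R₁'(p) + μ R₂'(p) = 0` with `R_i'(p) = a_i - 2p` makes the
equilibrium price affine in `μ`, `p(μ) = ((1 - μ) a₁ + μ a₂) / 2`, and
`CS_i(q) = q² / 2 - a_i q - c_i log q + k_i`. Substituting, `W^α(μ)` becomes
`(1 - 5α/2) p(μ)² - α c(μ) log p(μ)` plus an affine function of `μ`, where
`c(μ) = (1 - μ) c₁ + μ c₂`. The coefficient `1 - 5α/2` may be negative, but in the second
derivative the cross term `2α (c₁ - c₂)(a₂ - a₁) / (2p)` dominates it as soon as
`c₁ - c₂ ≥ (a₂ - a₁) a₂ / 2`, because `2p ≤ a₂`.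
-/

open Set Real Filter Topology

namespace LinearShiftDemand

noncomputable section

lemma revenue_eq {a c q : ℝ} (hq : q ≠ 0) : q * (a - q + c / q) = a * q - q ^ 2 + c := by
  field_simp

lemma revenue_eventuallyEq {a c q : ℝ} (hq : q ≠ 0) :
    (fun x => x * (a - x + c / x)) =ᶠ[𝓝 q] fun x => a * x - x ^ 2 + c := by
  filter_upwards [isOpen_ne.mem_nhds hq] with x hx using revenue_eq hx

lemma hasDerivAt_quadratic (a c x : ℝ) :
    HasDerivAt (fun x => a * x - x ^ 2 + c) (a - 2 * x) x := by
  simpa using (((hasDerivAt_id x).const_mul a).sub (hasDerivAt_pow 2 x)).add_const c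

lemma deriv_revenue {a c q : ℝ} (hq : q ≠ 0) :
    deriv (fun x => x * (a - x + c / x)) q = a - 2 * q := by
  rw [(revenue_eventuallyEq hq).deriv_eq, (hasDerivAt_quadratic a c q).deriv]

lemma deriv_deriv_revenue {a c q : ℝ} (hq : q ≠ 0) :
    deriv (deriv fun x => x * (a - x + c / x)) q = -2 := by
  have h : deriv (fun x => a * x - x ^ 2 + c) = fun x => a - 2 * x :=
    funext fun x => (hasDerivAt_quadratic a c x).deriv
  rw [(revenue_eventuallyEq hq).deriv.deriv_eq, h]
  simp

def surplusPrimitive (a c q : ℝ) : ℝ := q ^ 2 / 2 - a * q - c * log q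

lemma hasDerivAt_surplusPrimitive (a c : ℝ) {q : ℝ} (hq : q ≠ 0) :
    HasDerivAt (surplusPrimitive a c) (-(a - q + c / q)) q := by
  have h := (((hasDerivAt_pow 2 q).div_const 2).sub ((hasDerivAt_id q).const_mul a)).sub
    ((hasDerivAt_log hq).const_mul c)
  exact h.congr_deriv (by field_simp; ring)

lemma exists_eqOn_surplusPrimitive_add {a c : ℝ} {I : Set ℝ} (hIopen : IsOpen I)
    (hIconv : Convex ℝ I) (hI0 : (0 : ℝ) ∉ I) {CS : ℝ → ℝ}
    (hCS : ∀ q ∈ I, HasDerivAt CS (-(a - q + c / q)) q) :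
    ∃ k, EqOn CS (fun q => surplusPrimitive a c q + k) I := by
  have hF : ∀ q ∈ I, HasDerivAt (surplusPrimitive a c) (-(a - q + c / q)) q :=
    fun q hq => hasDerivAt_surplusPrimitive a c fun h0 => hI0 (h0 ▸ hq)
  exact hIopen.exists_eq_add_of_deriv_eq hIconv.isPreconnected
    (fun q hq => (hCS q hq).differentiableAt.differentiableWithinAt)
    (fun q hq => (hF q hq).differentiableAt.differentiableWithinAt)
    (fun q hq => by rw [(hCS q hq).deriv, (hF q hq).deriv])

def mix (u v μ : ℝ) : ℝ := (1 - μ) * u + μ * v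

lemma hasDerivAt_mix (u v μ : ℝ) : HasDerivAt (mix u v) (v - u) μ :=
  ((((hasDerivAt_id μ).const_sub 1).mul_const u).add ((hasDerivAt_id μ).mul_const v)).congr_deriv
    (by ring)

lemma mix_mem_Icc {u v μ : ℝ} (huv : u ≤ v) (hμ : μ ∈ Icc (0 : ℝ) 1) : mix u v μ ∈ Icc u v := by
  obtain ⟨h0, h1⟩ := hμ
  constructor <;> unfold mix <;> nlinarith

lemma mix_nonneg {u v μ : ℝ} (hu : 0 ≤ u) (hv : 0 ≤ v) (hμ : μ ∈ Icc (0 : ℝ) 1) :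
    0 ≤ mix u v μ :=
  add_nonneg (mul_nonneg (sub_nonneg.2 hμ.2) hu) (mul_nonneg hμ.1 hv)

section ValueFunction

variable (a₁ a₂ c₁ c₂ α k₁ k₂ : ℝ)

/-- `W^α(μ)` at the equilibrium price `mix a₁ a₂ μ / 2`, with `k₁, k₂` the integration constants
of `CS₁, CS₂`. -/
def valueFn (μ : ℝ) : ℝ :=
  (1 - 5 * α / 2) * (mix a₁ a₂ μ / 2) ^ 2 - α * mix c₁ c₂ μ * log (mix a₁ a₂ μ / 2)
    + (1 - α) * mix c₁ c₂ μ + α * mix k₁ k₂ μ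

def valueFnDeriv (μ : ℝ) : ℝ :=
  (1 - 5 * α / 2) * (a₂ - a₁) * (mix a₁ a₂ μ / 2) - α * (c₂ - c₁) * log (mix a₁ a₂ μ / 2)
    - α * mix c₁ c₂ μ * (a₂ - a₁) / mix a₁ a₂ μ + (1 - α) * (c₂ - c₁) + α * (k₂ - k₁)

def valueFnDeriv2 (μ : ℝ) : ℝ :=
  (1 - 5 * α / 2) * (a₂ - a₁) ^ 2 / 2 - 2 * α * (c₂ - c₁) * (a₂ - a₁) / mix a₁ a₂ μ
    + α * mix c₁ c₂ μ * (a₂ - a₁) ^ 2 / mix a₁ a₂ μ ^ 2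

variable {a₁ a₂ c₁ c₂ α k₁ k₂}

lemma hasDerivAt_valueFn {μ : ℝ} (hμ : mix a₁ a₂ μ ≠ 0) :
    HasDerivAt (valueFn a₁ a₂ c₁ c₂ α k₁ k₂) (valueFnDeriv a₁ a₂ c₁ c₂ α k₁ k₂ μ) μ := by
  have hP := (hasDerivAt_mix a₁ a₂ μ).div_const 2
  have hC := hasDerivAt_mix c₁ c₂ μ
  have h := ((((hP.pow 2).const_mul (1 - 5 * α / 2)).sub
    ((hC.const_mul α).mul (hP.log (by simpa using hμ)))).add (hC.const_mul (1 - α))).add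
    ((hasDerivAt_mix k₁ k₂ μ).const_mul α)
  exact h.congr_deriv (by unfold valueFnDeriv; field_simp; ring)

lemma hasDerivAt_valueFnDeriv {μ : ℝ} (hμ : mix a₁ a₂ μ ≠ 0) :
    HasDerivAt (valueFnDeriv a₁ a₂ c₁ c₂ α k₁ k₂) (valueFnDeriv2 a₁ a₂ c₁ c₂ α μ) μ := by
  have hA := hasDerivAt_mix a₁ a₂ μ
  have hC := hasDerivAt_mix c₁ c₂ μ
  have h := (((((hA.div_const 2).const_mul ((1 - 5 * α / 2) * (a₂ - a₁))).sub
    (((hA.div_const 2).log (by simpa using hμ)).const_mul (α * (c₂ - c₁)))).sub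
    (((hC.const_mul α).mul_const (a₂ - a₁)).div hA hμ)).add_const ((1 - α) * (c₂ - c₁))).add_const
    (α * (k₂ - k₁))
  refine h.congr_deriv ?_
  unfold valueFnDeriv2
  field_simp
  ring

lemma valueFnDeriv2_nonneg (ha₁ : 0 < a₁) (ha₁₂ : a₁ ≤ a₂) (hc₁ : 0 ≤ c₁) (hc₂ : 0 ≤ c₂)
    (hα₀ : 0 ≤ α) (hα₂ : α ≤ 2) (hgood : (a₂ - a₁) * a₂ / 2 ≤ c₁ - c₂) {μ : ℝ}
    (hμ : μ ∈ Icc (0 : ℝ) 1) : 0 ≤ valueFnDeriv2 a₁ a₂ c₁ c₂ α μ := by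
  obtain ⟨hA₁, hA₂⟩ := mix_mem_Icc ha₁₂ hμ
  have hC := mix_nonneg hc₁ hc₂ hμ
  set A := mix a₁ a₂ μ with hAdef
  set C := mix c₁ c₂ μ with hCdef
  have hA : 0 < A := ha₁.trans_le hA₁
  have hd : 0 ≤ a₂ - a₁ := sub_nonneg.2 ha₁₂
  have key : valueFnDeriv2 a₁ a₂ c₁ c₂ α μ * A ^ 2 =
      2 * (α * (a₂ - a₁) * A * (c₁ - c₂ - (a₂ - a₁) * a₂ / 2)) + α * (a₂ - a₁) ^ 2 * A * (a₂ - A)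
        + α * C * (a₂ - a₁) ^ 2 + (2 - α) * ((a₂ - a₁) * A) ^ 2 / 4 := by
    unfold valueFnDeriv2
    rw [← hAdef, ← hCdef]
    field_simp
    ring
  have : 0 ≤ valueFnDeriv2 a₁ a₂ c₁ c₂ α μ * A ^ 2 := by
    rw [key]
    have := sub_nonneg.2 hgood
    have := sub_nonneg.2 hA₂
    have := sub_nonneg.2 hα₂
    positivity
  exact nonneg_of_mul_nonneg_left this (by positivity)

theorem convexOn_valueFn (ha₁ : 0 < a₁) (ha₁₂ : a₁ ≤ a₂) (hc₁ : 0 ≤ c₁) (hc₂ : 0 ≤ c₂)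
    (hα₀ : 0 ≤ α) (hα₂ : α ≤ 2) (hgood : (a₂ - a₁) * a₂ / 2 ≤ c₁ - c₂) :
    ConvexOn ℝ (Icc 0 1) (valueFn a₁ a₂ c₁ c₂ α k₁ k₂) := by
  have hA : ∀ μ ∈ Icc (0 : ℝ) 1, mix a₁ a₂ μ ≠ 0 := fun μ hμ =>
    (ha₁.trans_le (mix_mem_Icc ha₁₂ hμ).1).ne'
  refine convexOn_of_hasDerivWithinAt2_nonneg (convex_Icc 0 1)
    (fun μ hμ => (hasDerivAt_valueFn (hA μ hμ)).continuousAt.continuousWithinAt)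
    (fun μ hμ => (hasDerivAt_valueFn (hA μ (interior_subset hμ))).hasDerivWithinAt)
    (fun μ hμ => (hasDerivAt_valueFnDeriv (hA μ (interior_subset hμ))).hasDerivWithinAt)
    (fun μ hμ => valueFnDeriv2_nonneg ha₁ ha₁₂ hc₁ hc₂ hα₀ hα₂ hgood (interior_subset hμ))

end ValueFunction

end

end LinearShiftDemand

open LinearShiftDemand

theorem stmt_9_general
    (a1 a2 c1 c2 : ℝ) (ha1 : 0 < a1) (ha12 : a1 < a2) (hc1 : 0 ≤ c1) (hc2 : 0 ≤ c2)
    (I : Set ℝ)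
    (hIopen : IsOpen I) (hIconv : Convex ℝ I) (hIpos : I ⊆ Set.Ioi (0:ℝ))
    (hIcc : Set.Icc (a1 / 2) (a2 / 2) ⊆ I)
    (D1 D2 R1 R2 : ℝ → ℝ)
    (hD1 : D1 = fun q => a1 - q + c1 / q) (hD2 : D2 = fun q => a2 - q + c2 / q)
    (hR1 : R1 = fun q => q * D1 q) (hR2 : R2 = fun q => q * D2 q)
    (p : ℝ → ℝ)
    (hp : ∀ μ ∈ Set.Icc (0:ℝ) 1, p μ ∈ Set.Icc (a1 / 2) (a2 / 2) ∧
      (1 - μ) * deriv R1 (p μ) + μ * deriv R2 (p μ) = 0)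
    (CS1 CS2 : ℝ → ℝ)
    (hCS1 : ∀ q ∈ I, HasDerivAt CS1 (-(D1 q)) q)
    (hCS2 : ∀ q ∈ I, HasDerivAt CS2 (-(D2 q)) q)
    (W : ℝ → ℝ → ℝ)
    (hW : ∀ α : ℝ, W α = fun μ =>
      (1 - μ) * (α * CS1 (p μ) + (1 - α) * R1 (p μ)) +
        μ * (α * CS2 (p μ) + (1 - α) * R2 (p μ)))
    (hgood : c1 - c2 ≥ (a2 - a1) * a2 / 2) :
    (∀ q ∈ I, R1 q = a1 * q - q ^ 2 + c1) ∧
    (∀ q ∈ I, R2 q = a2 * q - q ^ 2 + c2) ∧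
    (∀ q ∈ I, deriv (deriv R1) q = -2) ∧
    (∀ q ∈ I, deriv (deriv R2) q = -2) ∧
    deriv R1 (a1 / 2) = 0 ∧ deriv R2 (a2 / 2) = 0 ∧
    ∀ α ∈ Set.Ioc (0:ℝ) 1, ConvexOn ℝ (Set.Icc (0:ℝ) 1) (W α) := by
  subst hD1 hD2 hR1 hR2
  have hIne : ∀ q ∈ I, q ≠ 0 := fun q hq => (hIpos hq).ne'
  have hI0 : (0 : ℝ) ∉ I := fun h => hIne 0 h rfl
  have hprice : ∀ μ ∈ Icc (0 : ℝ) 1, p μ = mix a1 a2 μ / 2 := by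
    intro μ hμ
    obtain ⟨hpI, hfoc⟩ := hp μ hμ
    have hp0 : p μ ≠ 0 := hIne _ (hIcc hpI)
    rw [deriv_revenue hp0, deriv_revenue hp0] at hfoc
    unfold mix
    linarith
  obtain ⟨k1, hk1⟩ := exists_eqOn_surplusPrimitive_add hIopen hIconv hI0 hCS1
  obtain ⟨k2, hk2⟩ := exists_eqOn_surplusPrimitive_add hIopen hIconv hI0 hCS2
  refine ⟨fun q hq => revenue_eq (hIne q hq), fun q hq => revenue_eq (hIne q hq),
    fun q hq => deriv_deriv_revenue (hIne q hq), fun q hq => deriv_deriv_revenue (hIne q hq),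
    by rw [deriv_revenue (half_pos ha1).ne']; ring,
    by rw [deriv_revenue (half_pos (ha1.trans ha12)).ne']; ring, ?_⟩
  rintro α ⟨hα₀, hα₁⟩
  refine (convexOn_valueFn (k₁ := k1) (k₂ := k2) ha1 ha12.le hc1 hc2 hα₀.le (by linarith)
    (ge_iff_le.1 hgood)).congr fun μ hμ => ?_
  have hpI : p μ ∈ I := hIcc (hp μ hμ).1
  rw [hW]
  beta_reduce
  rw [hk1 hpI, hk2 hpI, revenue_eq (hIne _ hpI), revenue_eq (hIne _ hpI), hprice μ hμ]
  unfold valueFn surplusPrimitive mix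
  ring

/-- (Example: linear demands with shifts, monotonically good case.)
For `D_i(p) = a_i − p + c_i/p` with `0 < a_1 < a_2`, `c_1, c_2 ≥ 0`: `R_i(p) = a_i p − p² + c_i`,
`R_i'' = −2`, the monopoly prices are `a_i/2`, and if `c_1 − c_2 ≥ (a_2 − a_1)·a_2/2` then
`W^α` is convex on `[0,1]` for every `α ∈ (0,1]`. -/
theorem stmt_9
    (a1 a2 c1 c2 : ℝ) (ha1 : 0 < a1) (ha12 : a1 < a2) (hc1 : 0 ≤ c1) (hc2 : 0 ≤ c2)
    (I : Set ℝ)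
    (hIopen : IsOpen I) (hIconv : Convex ℝ I) (hIpos : I ⊆ Set.Ioi (0:ℝ))
    (hIcc : Set.Icc (a1 / 2) (a2 / 2) ⊆ I)
    (D1 D2 R1 R2 : ℝ → ℝ)
    (hD1 : D1 = fun q => a1 - q + c1 / q) (hD2 : D2 = fun q => a2 - q + c2 / q)
    (hD1pos : ∀ q ∈ I, 0 < D1 q) (hD2pos : ∀ q ∈ I, 0 < D2 q)
    (hR1 : R1 = fun q => q * D1 q) (hR2 : R2 = fun q => q * D2 q)
    (p : ℝ → ℝ)
    (hp : ∀ μ ∈ Set.Icc (0:ℝ) 1, p μ ∈ Set.Icc (a1 / 2) (a2 / 2) ∧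
      (1 - μ) * deriv R1 (p μ) + μ * deriv R2 (p μ) = 0)
    (CS1 CS2 : ℝ → ℝ)
    (hCS1 : ∀ q ∈ I, HasDerivAt CS1 (-(D1 q)) q)
    (hCS2 : ∀ q ∈ I, HasDerivAt CS2 (-(D2 q)) q)
    (W : ℝ → ℝ → ℝ)
    (hW : ∀ α : ℝ, W α = fun μ =>
      (1 - μ) * (α * CS1 (p μ) + (1 - α) * R1 (p μ)) +
        μ * (α * CS2 (p μ) + (1 - α) * R2 (p μ)))
    (hgood : c1 - c2 ≥ (a2 - a1) * a2 / 2) :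
    (∀ q ∈ I, R1 q = a1 * q - q ^ 2 + c1) ∧
    (∀ q ∈ I, R2 q = a2 * q - q ^ 2 + c2) ∧
    (∀ q ∈ I, deriv (deriv R1) q = -2) ∧
    (∀ q ∈ I, deriv (deriv R2) q = -2) ∧
    deriv R1 (a1 / 2) = 0 ∧ deriv R2 (a2 / 2) = 0 ∧
    ∀ α ∈ Set.Ioc (0:ℝ) 1, ConvexOn ℝ (Set.Icc (0:ℝ) 1) (W α) :=
  stmt_9_general a1 a2 c1 c2 ha1 ha12 hc1 hc2 I hIopen hIconv hIpos hIcc D1 D2 R1 R2 hD1 hD2 hR1 hR2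
    p hp CS1 CS2 hCS1 hCS2 W hW hgood
end

section
/- (Example: linear demands with shifts, monotonically bad case.) Let 0 < a_1 < a_2 and c_1, c_2 ≥ 0, and let I ⊆ (0,∞) be an open interval containing [a_1/2, a_2/2] on which D_1(p) := a_1 − p + c_1/p and D_2(p) := a_2 − p + c_2/p are both positive. With (L,H) = (1,2) this is a binary monopoly model with monopoly prices a_i/2. If c_1 ≤ c_2 ≤ a_1²/4, then for every α ∈ [1/2, 1] the value function W^α is concave on [0,1]. -/
open Set Filter Topology Real

/-! For `D(q) = a - q + c/q` the revenue is `a q - q² + c`, so the first-order condition makes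
`p(μ) = a₁/2 + μ (a₂ - a₁)/2` affine, and `CS = -a q + q²/2 - c log q + K`. Hence, up to an
affine function of `μ`, `W^α(μ) = -α c(μ) log q - (5α/2 - 1) q²` with `q = p(μ)` and
`c(μ) = c₁ + μ (c₂ - c₁)` both affine. In its second derivative the only positive term is
`α c(μ) q'² / q²`, which `c(μ) ≤ c₂ ≤ a₁²/4 ≤ q²` bounds by `α q'²`; the quadratic term removes
`(5α - 2) q'²`, which wins exactly when `α ≥ 1/2`. -/

section LinearDemandWithShift

variable (a c : ℝ)

theorem revenue_eq_of_ne_zero {q : ℝ} (hq : q ≠ 0) :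
    q * (a - q + c / q) = a * q - q ^ 2 + c := by
  field_simp

theorem hasDerivAt_revenue {x : ℝ} (hx : 0 < x) :
    HasDerivAt (fun q => q * (a - q + c / q)) (a - 2 * x) x := by
  have h : HasDerivAt (fun q => a * q - q ^ 2 + c) (a - 2 * x) x := by
    simpa using (((hasDerivAt_id x).const_mul a).sub (hasDerivAt_pow 2 x)).add_const c
  refine h.congr_of_eventuallyEq ?_
  filter_upwards [eventually_gt_nhds hx] with q hq using revenue_eq_of_ne_zero a c hq.ne'

theorem deriv_deriv_revenue {x : ℝ} (hx : 0 < x) :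
    deriv (deriv fun q => q * (a - q + c / q)) x = -2 := by
  have h : deriv (fun q => q * (a - q + c / q)) =ᶠ[𝓝 x] fun y => a - 2 * y := by
    filter_upwards [eventually_gt_nhds hx] with y hy using (hasDerivAt_revenue a c hy).deriv
  rw [h.deriv_eq]
  exact ((((hasDerivAt_id x).const_mul 2).const_sub a).congr_deriv (by simp)).deriv

theorem exists_eq_consumerSurplus {I : Set ℝ} (hIopen : IsOpen I) (hIconv : Convex ℝ I)
    (hIpos : I ⊆ Ioi 0) {CS : ℝ → ℝ} (hCS : ∀ q ∈ I, HasDerivAt CS (-(a - q + c / q)) q) :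
    ∃ K, ∀ q ∈ I, CS q = -(a * q) + q ^ 2 / 2 - c * log q + K := by
  have hprim : ∀ q ∈ I,
      HasDerivAt (fun q => -(a * q) + q ^ 2 / 2 - c * log q) (-(a - q + c / q)) q := by
    intro q hq
    have hq0 : q ≠ 0 := (hIpos hq).ne'
    have h := (((hasDerivAt_id q).const_mul a).neg.add ((hasDerivAt_pow 2 q).div_const 2)).sub
      ((hasDerivAt_log hq0).const_mul c)
    refine h.congr_deriv ?_
    field_simp
    ring
  obtain ⟨K, hK⟩ := hIopen.exists_eq_add_of_deriv_eq hIconv.isPreconnected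
    (fun q hq => (hCS q hq).differentiableAt.differentiableWithinAt)
    (fun q hq => (hprim q hq).differentiableAt.differentiableWithinAt)
    (fun q hq => (hCS q hq).deriv.trans (hprim q hq).deriv.symm)
  exact ⟨K, fun q hq => hK hq⟩

end LinearDemandWithShift

theorem eq_of_weighted_deriv_revenue_eq_zero {a1 a2 c1 c2 μ x : ℝ} (hx : 0 < x)
    (hfoc : (1 - μ) * deriv (fun q => q * (a1 - q + c1 / q)) x
      + μ * deriv (fun q => q * (a2 - q + c2 / q)) x = 0) :
    x = a1 / 2 + μ * ((a2 - a1) / 2) := by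
  rw [(hasDerivAt_revenue a1 c1 hx).deriv, (hasDerivAt_revenue a2 c2 hx).deriv] at hfoc
  linear_combination (-1/2 : ℝ) * hfoc

theorem concaveOn_neg_mul_log_sub_mul_sq {s : Set ℝ} (hs : Convex ℝ s) {a d c Δ α γ : ℝ}
    (hα : 0 ≤ α) (hαγ : α ≤ 2 * γ) (hdΔ : 0 ≤ d * Δ) (hpos : ∀ μ ∈ s, 0 < a + μ * d)
    (hle : ∀ μ ∈ s, c + μ * Δ ≤ (a + μ * d) ^ 2) :
    ConcaveOn ℝ s fun μ => -(α * ((c + μ * Δ) * log (a + μ * d))) - γ * (a + μ * d) ^ 2 := by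
  have hq : ∀ μ, HasDerivAt (fun μ => a + μ * d) d μ := fun μ => by
    simpa using ((hasDerivAt_id μ).mul_const d).const_add a
  have hc : ∀ μ, HasDerivAt (fun μ => c + μ * Δ) Δ μ := fun μ => by
    simpa using ((hasDerivAt_id μ).mul_const Δ).const_add c
  have hF' : ∀ μ ∈ s, HasDerivAt
      (fun μ => -(α * ((c + μ * Δ) * log (a + μ * d))) - γ * (a + μ * d) ^ 2)
      (-(α * (Δ * log (a + μ * d) + (c + μ * Δ) * (d / (a + μ * d))))
        - γ * (2 * (a + μ * d) * d)) μ := fun μ hμ => by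
    have h := (((hc μ).mul ((hq μ).log (hpos μ hμ).ne')).const_mul α).neg.sub
      (((hq μ).pow 2).const_mul γ)
    refine h.congr_deriv ?_
    norm_num
  have hF'' : ∀ μ ∈ s, HasDerivAt
      (fun μ => -(α * (Δ * log (a + μ * d) + (c + μ * Δ) * (d / (a + μ * d))))
        - γ * (2 * (a + μ * d) * d))
      (-(α * (2 * (Δ * (d / (a + μ * d))) - (c + μ * Δ) * (d / (a + μ * d)) ^ 2))
        - 2 * γ * d ^ 2) μ := fun μ hμ => by
    have hq0 := (hpos μ hμ).ne'
    have hslope : HasDerivAt (fun μ => d / (a + μ * d)) (-(d / (a + μ * d)) ^ 2) μ := by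
      refine ((hasDerivAt_const μ d).div (hq μ) hq0).congr_deriv ?_
      field_simp
      ring
    have h := ((((hq μ).log hq0).const_mul Δ).add ((hc μ).mul hslope)).const_mul α |>.neg.sub
      (((hq μ).const_mul 2).mul_const d |>.const_mul γ)
    refine h.congr_deriv ?_
    ring
  refine concaveOn_of_hasDerivWithinAt2_nonpos hs
    (fun μ hμ => (hF' μ hμ).continuousAt.continuousWithinAt)
    (fun μ hμ => (hF' μ (interior_subset hμ)).hasDerivWithinAt)
    (fun μ hμ => (hF'' μ (interior_subset hμ)).hasDerivWithinAt) fun μ hμ => ?_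
  replace hμ := interior_subset hμ
  have hq0 := hpos μ hμ
  have hcross : 0 ≤ Δ * (d / (a + μ * d)) := by
    rw [mul_div_assoc', mul_comm Δ]
    exact div_nonneg hdΔ hq0.le
  have hshift : (c + μ * Δ) * (d / (a + μ * d)) ^ 2 ≤ d ^ 2 := by
    rw [div_pow, mul_div_assoc', div_le_iff₀ (by positivity)]
    nlinarith [hle μ hμ, sq_nonneg d]
  nlinarith [sq_nonneg d]

theorem stmt_10_general
    (a1 a2 c1 c2 : ℝ) (ha1 : 0 < a1) (ha12 : a1 < a2)
    (I : Set ℝ)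
    (hIopen : IsOpen I) (hIconv : Convex ℝ I) (hIpos : I ⊆ Set.Ioi (0:ℝ))
    (hIcc : Set.Icc (a1 / 2) (a2 / 2) ⊆ I)
    (D1 D2 R1 R2 : ℝ → ℝ)
    (hD1 : D1 = fun q => a1 - q + c1 / q) (hD2 : D2 = fun q => a2 - q + c2 / q)
    (hR1 : R1 = fun q => q * D1 q) (hR2 : R2 = fun q => q * D2 q)
    (p : ℝ → ℝ)
    (hp : ∀ μ ∈ Set.Icc (0:ℝ) 1, p μ ∈ Set.Icc (a1 / 2) (a2 / 2) ∧
      (1 - μ) * deriv R1 (p μ) + μ * deriv R2 (p μ) = 0)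
    (CS1 CS2 : ℝ → ℝ)
    (hCS1 : ∀ q ∈ I, HasDerivAt CS1 (-(D1 q)) q)
    (hCS2 : ∀ q ∈ I, HasDerivAt CS2 (-(D2 q)) q)
    (W : ℝ → ℝ → ℝ)
    (hW : ∀ α : ℝ, W α = fun μ =>
      (1 - μ) * (α * CS1 (p μ) + (1 - α) * R1 (p μ)) +
        μ * (α * CS2 (p μ) + (1 - α) * R2 (p μ)))
    (hbad1 : c1 ≤ c2) (hbad2 : c2 ≤ a1 ^ 2 / 4) :
    (∀ q ∈ I, deriv (deriv R1) q = -2) ∧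
    (∀ q ∈ I, deriv (deriv R2) q = -2) ∧
    deriv R1 (a1 / 2) = 0 ∧ deriv R2 (a2 / 2) = 0 ∧
    ∀ α ∈ Set.Icc (1/2 : ℝ) 1, ConcaveOn ℝ (Set.Icc (0:ℝ) 1) (W α) := by
  subst hD1 hD2 hR1 hR2
  refine ⟨fun q hq => deriv_deriv_revenue a1 c1 (hIpos hq),
    fun q hq => deriv_deriv_revenue a2 c2 (hIpos hq), ?_, ?_, ?_⟩
  · rw [(hasDerivAt_revenue a1 c1 (by positivity)).deriv]; ring
  · rw [(hasDerivAt_revenue a2 c2 (by linarith)).deriv]; ring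
  rintro α ⟨hα, -⟩
  have hp_eq : ∀ μ ∈ Icc (0:ℝ) 1, p μ = a1 / 2 + μ * ((a2 - a1) / 2) := fun μ hμ =>
    eq_of_weighted_deriv_revenue_eq_zero (hIpos (hIcc (hp μ hμ).1)) (hp μ hμ).2
  obtain ⟨K1, hK1⟩ := exists_eq_consumerSurplus a1 c1 hIopen hIconv hIpos hCS1
  obtain ⟨K2, hK2⟩ := exists_eq_consumerSurplus a2 c2 hIopen hIconv hIpos hCS2
  have hshift_le :
      ∀ μ ∈ Icc (0:ℝ) 1, c1 + μ * (c2 - c1) ≤ (a1 / 2 + μ * ((a2 - a1) / 2)) ^ 2 := by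
    intro μ hμ
    have hpμ := (hp μ hμ).1.1
    rw [hp_eq μ hμ] at hpμ
    nlinarith [hμ.2]
  have hconc := concaveOn_neg_mul_log_sub_mul_sq (convex_Icc 0 1) (γ := 5 * α / 2 - 1)
    (by linarith) (by linarith) (mul_nonneg (by linarith) (by linarith : 0 ≤ c2 - c1))
    (fun μ hμ => by nlinarith [hμ.1]) hshift_le
  refine ((hconc.add ((LinearMap.mulLeft ℝ (α * (K2 - K1) + (1 - α) * (c2 - c1))).concaveOn
    (convex_Icc 0 1))).add_const (α * K1 + (1 - α) * c1)).congr fun μ hμ => ?_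
  have hpI := hIcc (hp μ hμ).1
  have hp0 : p μ ≠ 0 := (hIpos hpI).ne'
  simp only [hW, Pi.add_apply, LinearMap.mulLeft_apply]
  rw [hK1 _ hpI, hK2 _ hpI, revenue_eq_of_ne_zero a1 c1 hp0, revenue_eq_of_ne_zero a2 c2 hp0,
    hp_eq μ hμ]
  ring

/-- (Example: linear demands with shifts, monotonically bad case.)
For `D_i(p) = a_i − p + c_i/p` with `0 < a_1 < a_2`, `c_1, c_2 ≥ 0` and monopoly prices
`a_i/2`: if `c_1 ≤ c_2 ≤ a_1²/4` then `W^α` is concave on `[0,1]` for every `α ∈ [1/2, 1]`. -/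
theorem stmt_10
    (a1 a2 c1 c2 : ℝ) (ha1 : 0 < a1) (ha12 : a1 < a2) (hc1 : 0 ≤ c1) (hc2 : 0 ≤ c2)
    (I : Set ℝ)
    (hIopen : IsOpen I) (hIconv : Convex ℝ I) (hIpos : I ⊆ Set.Ioi (0:ℝ))
    (hIcc : Set.Icc (a1 / 2) (a2 / 2) ⊆ I)
    (D1 D2 R1 R2 : ℝ → ℝ)
    (hD1 : D1 = fun q => a1 - q + c1 / q) (hD2 : D2 = fun q => a2 - q + c2 / q)
    (hD1pos : ∀ q ∈ I, 0 < D1 q) (hD2pos : ∀ q ∈ I, 0 < D2 q)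
    (hR1 : R1 = fun q => q * D1 q) (hR2 : R2 = fun q => q * D2 q)
    (p : ℝ → ℝ)
    (hp : ∀ μ ∈ Set.Icc (0:ℝ) 1, p μ ∈ Set.Icc (a1 / 2) (a2 / 2) ∧
      (1 - μ) * deriv R1 (p μ) + μ * deriv R2 (p μ) = 0)
    (CS1 CS2 : ℝ → ℝ)
    (hCS1 : ∀ q ∈ I, HasDerivAt CS1 (-(D1 q)) q)
    (hCS2 : ∀ q ∈ I, HasDerivAt CS2 (-(D2 q)) q)
    (W : ℝ → ℝ → ℝ)
    (hW : ∀ α : ℝ, W α = fun μ =>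
      (1 - μ) * (α * CS1 (p μ) + (1 - α) * R1 (p μ)) +
        μ * (α * CS2 (p μ) + (1 - α) * R2 (p μ)))
    (hbad1 : c1 ≤ c2) (hbad2 : c2 ≤ a1 ^ 2 / 4) :
    (∀ q ∈ I, deriv (deriv R1) q = -2) ∧
    (∀ q ∈ I, deriv (deriv R2) q = -2) ∧
    deriv R1 (a1 / 2) = 0 ∧ deriv R2 (a2 / 2) = 0 ∧
    ∀ α ∈ Set.Icc (1/2 : ℝ) 1, ConcaveOn ℝ (Set.Icc (0:ℝ) 1) (W α) :=
  stmt_10_general a1 a2 c1 c2 ha1 ha12 I hIopen hIconv hIpos hIcc D1 D2 R1 R2 hD1 hD2 hR1 hR2 p hp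
    CS1 CS2 hCS1 hCS2 W hW hbad1 hbad2
end

section
/- For all real numbers c > 0, θ > 1, x with 0 < x ≤ 1/2, and every p with c/(θ + x − 1) ≤ p ≤ c/(θ − 1), the inequality ((c + p)^x − 1)·(c − (θ − 1)·p) + p·x ≥ 0 holds. -/
/-- For all real `c > 0`, `θ > 1`, `0 < x ≤ 1/2` and every
`p ∈ [c/(θ+x−1), c/(θ−1)]`, one has `((c+p)^x − 1)·(c − (θ−1)p) + p·x ≥ 0`. -/
theorem stmt_13 (c θ x p : ℝ) (hc : 0 < c) (hθ : 1 < θ) (hx0 : 0 < x) (hx : x ≤ 1/2)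
    (hp1 : c / (θ + x - 1) ≤ p) (hp2 : p ≤ c / (θ - 1)) :
    0 ≤ ((c + p) ^ x - 1) * (c - (θ - 1) * p) + p * x := by
  have hθx : 0 < θ + x - 1 := by linarith
  have hp0 : 0 < p := lt_of_lt_of_le (div_pos hc hθx) hp1
  have h1 : c ≤ p * (θ + x - 1) := (div_le_iff₀ hθx).mp hp1
  have h2 : p * (θ - 1) ≤ c := (le_div_iff₀ (by linarith)).mp hp2
  have hA : 0 ≤ c - (θ - 1) * p := by nlinarith
  have h3 : c - (θ - 1) * p ≤ p * x := by nlinarith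
  have hpos : 0 < (c + p) ^ x := Real.rpow_pos_of_pos (by linarith) x
  nlinarith [mul_nonneg hpos.le hA]
end

section
/- (Theorem 2(ii), core bound.) Let K ⊆ ℝⁿ be compact and convex, let W : ℝⁿ → ℝ be twice continuously differentiable, and let λ̲ ≤ λ̄ be real numbers such that λ̲·‖h‖² ≤ ⟨h, (∇²W(μ))·h⟩ ≤ λ̄·‖h‖² for every μ ∈ K and h ∈ ℝⁿ. Let σ' be a Borel probability measure on K and let Q be a Markov kernel from K to K such that ∫ μ dQ(μ | μ') = μ' for σ'-almost every μ' (the mean-preserving spread/Blackwell condition), and let σ be the composition measure σ(A) := ∫ Q(A | μ') dσ'(μ'). Then (λ̲/2)·( ∫ ‖μ‖² dσ(μ) − ∫ ‖μ'‖² dσ'(μ') ) ≤ ∫ W dσ − ∫ W dσ' ≤ (λ̄/2)·( ∫ ‖μ‖² dσ(μ) − ∫ ‖μ'‖² dσ'(μ') ). -/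
/-!
The Hessian bounds say that `W - (λ̲/2)‖·‖²` and `(λ̄/2)‖·‖² - W` are convex on `K`. Since
`Q(· | μ')` has barycenter `μ'`, Jensen's inequality gives `f μ' ≤ ∫ f dQ(· | μ')` for every
continuous convex `f`, and integrating against `σ'` shows `∫ f dσ' ≤ ∫ f dσ`. Applied to the two
convex functions above, this is the two-sided bound.
-/

open MeasureTheory ProbabilityTheory Set
open scoped RealInnerProductSpace

section Hessian

variable {E : Type*} [NormedAddCommGroup E] [NormedSpace ℝ E]

theorem hasDerivAt_add_smul (x v : E) (t : ℝ) : HasDerivAt (fun s : ℝ => x + s • v) v t := by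
  simpa using ((hasDerivAt_id t).smul_const v).const_add x

theorem hasDerivAt_comp_add_smul {g : E → ℝ} {x v : E} {t : ℝ}
    (hg : DifferentiableAt ℝ g (x + t • v)) :
    HasDerivAt (fun s : ℝ => g (x + s • v)) (fderiv ℝ g (x + t • v) v) t :=
  hg.hasFDerivAt.comp_hasDerivAt t (hasDerivAt_add_smul x v t)

theorem hasDerivAt_fderiv_comp_add_smul {g : E → ℝ} {x v : E} {t : ℝ}
    (hg : DifferentiableAt ℝ (fderiv ℝ g) (x + t • v)) :
    HasDerivAt (fun s : ℝ => fderiv ℝ g (x + s • v) v)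
      (iteratedFDeriv ℝ 2 g (x + t • v) ![v, v]) t := by
  have h : HasDerivAt (fun s : ℝ => fderiv ℝ g (x + s • v))
      (fderiv ℝ (fderiv ℝ g) (x + t • v) v) t :=
    hg.hasFDerivAt.comp_hasDerivAt t (hasDerivAt_add_smul x v t)
  simpa [iteratedFDeriv_two_apply] using h.clm_apply (hasDerivAt_const t v)

theorem convexOn_of_iteratedFDeriv_two_nonneg {K : Set E} (hK : Convex ℝ K) {g : E → ℝ}
    (hg : ContDiff ℝ 2 g) (hpos : ∀ x ∈ K, ∀ h, 0 ≤ iteratedFDeriv ℝ 2 g x ![h, h]) :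
    ConvexOn ℝ K g := by
  refine ⟨hK, fun x hx y hy a b ha hb hab => ?_⟩
  have hdg : Differentiable ℝ g := hg.differentiable two_ne_zero
  have hdg' : Differentiable ℝ (fderiv ℝ g) :=
    (hg.fderiv_right (m := 1) le_rfl).differentiable one_ne_zero
  have hsegment : ∀ s ∈ Icc (0 : ℝ) 1, x + s • (y - x) ∈ K := fun s hs => by
    simpa [AffineMap.lineMap_apply_module', add_comm] using hK.lineMap_mem hx hy hs
  have hline : ConvexOn ℝ (Icc 0 1) (fun s : ℝ => g (x + s • (y - x))) :=
    convexOn_of_hasDerivWithinAt2_nonneg (convex_Icc 0 1)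
      (hdg.continuous.comp (by fun_prop)).continuousOn
      (fun s _ => (hasDerivAt_comp_add_smul (hdg _)).hasDerivWithinAt)
      (fun s _ => (hasDerivAt_fderiv_comp_add_smul (hdg' _)).hasDerivWithinAt)
      (fun s hs => hpos _ (hsegment s (interior_subset hs)) _)
  have := hline.2 (left_mem_Icc.2 zero_le_one) (right_mem_Icc.2 zero_le_one) ha hb hab
  simp only [smul_eq_mul, mul_zero, mul_one, zero_add, zero_smul, add_zero, one_smul,
    add_sub_cancel] at this ⊢
  obtain rfl : a = 1 - b := by linarith
  convert this using 2
  module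

end Hessian

section NormSq

variable {F : Type*} [NormedAddCommGroup F] [InnerProductSpace ℝ F]

theorem iteratedFDeriv_two_norm_sq_apply (x h : F) :
    iteratedFDeriv ℝ 2 (fun x : F => ‖x‖ ^ 2) x ![h, h] = 2 * ‖h‖ ^ 2 := by
  rw [iteratedFDeriv_two_apply, fderiv_norm_sq, ← FunLike.coe_smul,
    ContinuousLinearMap.fderiv]
  simp only [Fin.isValue, Matrix.cons_val_zero, Matrix.cons_val_one, Matrix.cons_val_fin_one,
    smul_apply, nsmul_eq_mul, Nat.cast_ofNat]
  rw [innerSL_apply_apply, real_inner_self_eq_norm_sq]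

theorem iteratedFDeriv_two_sub_half_mul_norm_sq_apply {g : F → ℝ} (hg : ContDiff ℝ 2 g)
    (c : ℝ) (x h : F) :
    iteratedFDeriv ℝ 2 (fun x => g x - c / 2 * ‖x‖ ^ 2) x ![h, h] =
      iteratedFDeriv ℝ 2 g x ![h, h] - c * ‖h‖ ^ 2 := by
  have hsq : ContDiff ℝ 2 (fun x : F => ‖x‖ ^ 2) := contDiff_norm_sq ℝ
  have hfun : (fun x => g x - c / 2 * ‖x‖ ^ 2) = g - (c / 2) • fun x : F => ‖x‖ ^ 2 := by
    ext; simp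
  have hsq' : ContDiffAt ℝ 2 ((c / 2) • fun x : F => ‖x‖ ^ 2) x :=
    hsq.contDiffAt.const_smul (c / 2)
  rw [hfun, iteratedFDeriv_sub_apply hg.contDiffAt hsq',
    iteratedFDeriv_const_smul_apply hsq.contDiffAt]
  simp only [sub_apply, smul_apply, iteratedFDeriv_two_norm_sq_apply, smul_eq_mul, sub_right_inj]
  ring

theorem ContDiff.convexOn_sub_half_mul_norm_sq {K : Set F} (hK : Convex ℝ K) {g : F → ℝ}
    (hg : ContDiff ℝ 2 g) {c : ℝ}
    (hc : ∀ x ∈ K, ∀ h, c * ‖h‖ ^ 2 ≤ iteratedFDeriv ℝ 2 g x ![h, h]) :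
    ConvexOn ℝ K (fun x => g x - c / 2 * ‖x‖ ^ 2) :=
  convexOn_of_iteratedFDeriv_two_nonneg hK (hg.sub (contDiff_const.mul (contDiff_norm_sq ℝ)))
    fun x hx h => by
      rw [iteratedFDeriv_two_sub_half_mul_norm_sq_apply hg]
      linarith [hc x hx h]

theorem ContDiff.convexOn_half_mul_norm_sq_sub {K : Set F} (hK : Convex ℝ K) {g : F → ℝ}
    (hg : ContDiff ℝ 2 g) {c : ℝ}
    (hc : ∀ x ∈ K, ∀ h, iteratedFDeriv ℝ 2 g x ![h, h] ≤ c * ‖h‖ ^ 2) :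
    ConvexOn ℝ K (fun x => c / 2 * ‖x‖ ^ 2 - g x) := by
  have := hg.neg.convexOn_sub_half_mul_norm_sq hK (c := -c) fun x hx h => by
    rw [show (fun x => -g x) = -g from rfl, iteratedFDeriv_neg_apply, neg_apply]
    linarith [hc x hx h]
  convert this using 2
  ring

end NormSq

theorem ContinuousOn.integrable_of_ae_mem {α : Type*} [TopologicalSpace α] [MeasurableSpace α]
    [OpensMeasurableSpace α] [T2Space α] {F : Type*} [NormedAddCommGroup F] {f : α → F}
    {K : Set α} {μ : Measure α} [IsFiniteMeasure μ] (hf : ContinuousOn f K) (hK : IsCompact K)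
    (hμ : ∀ᵐ x ∂μ, x ∈ K) : Integrable f μ := by
  rw [← Measure.restrict_eq_self_of_ae_mem hμ]
  exact hf.integrableOn_compact hK

theorem ConvexOn.integral_le_integral_comp {E : Type*} [NormedAddCommGroup E]
    [NormedSpace ℝ E] [CompleteSpace E] [MeasurableSpace E] [BorelSpace E]
    {K : Set E} {f : E → ℝ} (hfK : ConvexOn ℝ K f) (hf : ContinuousOn f K) (hK : IsCompact K)
    {σ' : Measure E} [IsFiniteMeasure σ']
    (hσ' : ∀ᵐ x ∂σ', x ∈ K) {Q : Kernel E E} [IsMarkovKernel Q]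
    (hQ : ∀ᵐ x ∂σ', ∀ᵐ y ∂Q x, y ∈ K) (hmean : ∀ᵐ x ∂σ', ∫ y, y ∂Q x = x) :
    ∫ x, f x ∂σ' ≤ ∫ y, f y ∂(Q ∘ₘ σ') := by
  have hfσ : Integrable f (Q ∘ₘ σ') :=
    hf.integrable_of_ae_mem hK (Measure.ae_comp_of_ae_ae hK.measurableSet hQ)
  have hjensen : ∀ᵐ x ∂σ', f x ≤ ∫ y, f y ∂Q x := by
    filter_upwards [hQ, hmean] with x hQx hxmean
    simpa [hxmean] using hfK.map_integral_le hf hK.isClosed hQx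
      (continuousOn_id.integrable_of_ae_mem hK hQx) (hf.integrable_of_ae_mem hK hQx)
  rw [Measure.comp_eq_comp_const_apply] at hfσ ⊢
  rw [Kernel.integral_comp hfσ]
  exact integral_mono_ae (hf.integrable_of_ae_mem hK hσ') hfσ.integral_comp hjensen

theorem stmt_15_general (n : ℕ) (K : Set (EuclideanSpace ℝ (Fin n)))
    (hK : IsCompact K) (hKconv : Convex ℝ K)
    (W : EuclideanSpace ℝ (Fin n) → ℝ) (hW : ContDiff ℝ 2 W)
    (lam_lo lam_hi : ℝ)
    (hHess : ∀ μ ∈ K, ∀ h : EuclideanSpace ℝ (Fin n),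
      lam_lo * ‖h‖ ^ 2 ≤ iteratedFDeriv ℝ 2 W μ ![h, h] ∧
        iteratedFDeriv ℝ 2 W μ ![h, h] ≤ lam_hi * ‖h‖ ^ 2)
    (σ' : Measure (EuclideanSpace ℝ (Fin n))) [IsProbabilityMeasure σ']
    (hσ'K : σ' Kᶜ = 0)
    (Q : Kernel (EuclideanSpace ℝ (Fin n)) (EuclideanSpace ℝ (Fin n))) [IsMarkovKernel Q]
    (hQK : ∀ μ' ∈ K, Q μ' Kᶜ = 0)
    (hmean : ∀ᵐ μ' ∂σ', (∫ μ, μ ∂(Q μ')) = μ')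
    (σ : Measure (EuclideanSpace ℝ (Fin n)))
    (hσ : σ = σ'.bind (fun x => Q x)) :
    lam_lo / 2 * ((∫ μ, ‖μ‖ ^ 2 ∂σ) - ∫ μ, ‖μ‖ ^ 2 ∂σ') ≤
        (∫ μ, W μ ∂σ) - ∫ μ, W μ ∂σ' ∧
      (∫ μ, W μ ∂σ) - ∫ μ, W μ ∂σ' ≤
        lam_hi / 2 * ((∫ μ, ‖μ‖ ^ 2 ∂σ) - ∫ μ, ‖μ‖ ^ 2 ∂σ') := by
  obtain rfl : σ = Q ∘ₘ σ' := hσ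
  have hWc := hW.continuous
  have hN : Continuous fun x : EuclideanSpace ℝ (Fin n) => ‖x‖ ^ 2 := by fun_prop
  have hσ'_ae : ∀ᵐ x ∂σ', x ∈ K := ae_iff.2 hσ'K
  have hQ_ae : ∀ᵐ x ∂σ', ∀ᵐ y ∂Q x, y ∈ K := hσ'_ae.mono fun x hx => ae_iff.2 (hQK x hx)
  have hσ_ae : ∀ᵐ y ∂(Q ∘ₘ σ'), y ∈ K := Measure.ae_comp_of_ae_ae hK.measurableSet hQ_ae
  have hlo := (hW.convexOn_sub_half_mul_norm_sq hKconv fun x hx h => (hHess x hx h).1)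
    |>.integral_le_integral_comp (by fun_prop) hK hσ'_ae hQ_ae hmean
  have hhi := (hW.convexOn_half_mul_norm_sq_sub hKconv fun x hx h => (hHess x hx h).2)
    |>.integral_le_integral_comp (by fun_prop) hK hσ'_ae hQ_ae hmean
  have hWσ' := hWc.continuousOn.integrable_of_ae_mem hK hσ'_ae
  have hWσ := hWc.continuousOn.integrable_of_ae_mem hK hσ_ae
  have hNσ' := hN.continuousOn.integrable_of_ae_mem hK hσ'_ae
  have hNσ := hN.continuousOn.integrable_of_ae_mem hK hσ_ae
  rw [integral_sub hWσ' (hNσ'.const_mul _), integral_sub hWσ (hNσ.const_mul _)] at hlo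
  rw [integral_sub (hNσ'.const_mul _) hWσ', integral_sub (hNσ.const_mul _) hWσ] at hhi
  simp only [integral_const_mul] at hlo hhi
  constructor <;> linarith

/-- (Theorem 2(ii), core bound.) If the Hessian quadratic form of `W` is
bounded between `λ̲‖h‖²` and `λ̄‖h‖²` on a compact convex `K`, `σ'` is a probability measure
on `K`, `Q` a Markov kernel from `K` to `K` with `∫ μ dQ(μ|μ') = μ'` for `σ'`-a.e. `μ'`, and
`σ = σ'.bind Q`, then
`(λ̲/2)(∫‖μ‖²dσ − ∫‖μ‖²dσ') ≤ ∫W dσ − ∫W dσ' ≤ (λ̄/2)(∫‖μ‖²dσ − ∫‖μ‖²dσ')`. -/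
theorem stmt_15 (n : ℕ) (K : Set (EuclideanSpace ℝ (Fin n)))
    (hK : IsCompact K) (hKconv : Convex ℝ K)
    (W : EuclideanSpace ℝ (Fin n) → ℝ) (hW : ContDiff ℝ 2 W)
    (lam_lo lam_hi : ℝ) (hlam : lam_lo ≤ lam_hi)
    (hHess : ∀ μ ∈ K, ∀ h : EuclideanSpace ℝ (Fin n),
      lam_lo * ‖h‖ ^ 2 ≤ iteratedFDeriv ℝ 2 W μ ![h, h] ∧
        iteratedFDeriv ℝ 2 W μ ![h, h] ≤ lam_hi * ‖h‖ ^ 2)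
    (σ' : Measure (EuclideanSpace ℝ (Fin n))) [IsProbabilityMeasure σ']
    (hσ'K : σ' Kᶜ = 0)
    (Q : Kernel (EuclideanSpace ℝ (Fin n)) (EuclideanSpace ℝ (Fin n))) [IsMarkovKernel Q]
    (hQK : ∀ μ' ∈ K, Q μ' Kᶜ = 0)
    (hmean : ∀ᵐ μ' ∂σ', (∫ μ, μ ∂(Q μ')) = μ')
    (σ : Measure (EuclideanSpace ℝ (Fin n)))
    (hσ : σ = σ'.bind (fun x => Q x)) :
    lam_lo / 2 * ((∫ μ, ‖μ‖ ^ 2 ∂σ) - ∫ μ, ‖μ‖ ^ 2 ∂σ') ≤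
        (∫ μ, W μ ∂σ) - ∫ μ, W μ ∂σ' ∧
      (∫ μ, W μ ∂σ) - ∫ μ, W μ ∂σ' ≤
        lam_hi / 2 * ((∫ μ, ‖μ‖ ^ 2 ∂σ) - ∫ μ, ‖μ‖ ^ 2 ∂σ') :=
  stmt_15_general n K hK hKconv W hW lam_lo lam_hi hHess σ' hσ'K Q hQK hmean σ hσ
end

section
/- (Full exclusion: optimal prices and the opening-new-markets threshold.) In the full-exclusion binary model: (i) for every μ ∈ [0,1], every maximizer of R_μ := (1−μ)·R_L + μ·R_H over [0,∞) lies in [p_L*, p̄_L] ∪ {p_H*}; (ii) there exists μ̂ ∈ (0,1) such that for every μ ∈ [0,1], p_H* is a maximizer of R_μ over [0,∞) if and only if μ ≥ μ̂, and for every μ > μ̂, p_H* is the unique maximizer of R_μ over [0,∞). -/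
/-!
Above `p̄_L` only the high market pays, so `p_H*` beats every other price there; below `p_L*` both
revenues increase (`R_H` is linear on `[0, p̲_H]` and concave after, hence increasing up to its peak
`p_H* > p_L*`), so `p_L*` beats every lower price.

Since `R_L(p_H*) = 0`, the gap `R_μ(q) - R_μ(p_H*) = (1 - μ) R_L(q) + μ (R_H(q) - R_H(p_H*))` is
affine in `μ` and negative at `μ = 1` for `q ≠ p_H*`. So the set of `μ` at which `p_H*` is optimal is
a closed up-ray, on whose interior `p_H*` is the unique optimum; `μ̂` is its left end. It is positive
because `R_L(p_L*) > 0`, and below `1` because `R_H ≤ R_H(p̄_L) < R_H(p_H*)` on `[0, p̄_L]`.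
-/

open Set

theorem isMaxOn_of_forall_ne_lt {α β : Type*} [Preorder β] {f : α → β} {s : Set α} {a : α}
    (h : ∀ x ∈ s, x ≠ a → f x < f a) : IsMaxOn f s a :=
  isMaxOn_iff.2 fun x hx => (eq_or_ne x a).elim (fun hxa => hxa ▸ le_rfl) fun hxa => (h x hx hxa).le

theorem ConcaveOn.monotoneOn_of_isMaxOn {𝕜 β : Type*} [Field 𝕜] [LinearOrder 𝕜]
    [IsStrictOrderedRing 𝕜] [AddCommGroup β] [LinearOrder β] [IsOrderedAddMonoid β]
    [Module 𝕜 β] [IsStrictOrderedModule 𝕜 β] {s : Set 𝕜} {f : 𝕜 → β} {c : 𝕜}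
    (hf : ConcaveOn 𝕜 s f) (hc : c ∈ s) (hmax : IsMaxOn f s c) :
    MonotoneOn f (s ∩ Iic c) := by
  intro x hx y hy hxy
  have h := hf.min_le_of_mem_Icc hx.1 hc ⟨hxy, hy.2⟩
  rwa [min_eq_left (hmax hx.1)] at h

theorem isClosed_setOf_isMaxOn {X α β : Type*} [TopologicalSpace X] [TopologicalSpace β]
    [Preorder β] [OrderClosedTopology β] {F : X → α → β} {s : Set α} {b : α}
    (hF : ∀ x, Continuous fun μ => F μ x) : IsClosed {μ | IsMaxOn (F μ) s b} := by
  simp only [isMaxOn_iff, ofPred_forall]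
  exact isClosed_biInter fun x _ => isClosed_le (hF x) (hF b)

theorem monotoneOn_revenue_Icc_zero {D : ℝ → ℝ} {pl pb p : ℝ} (hpl : 0 ≤ pl)
    (hconst : ∀ q ∈ Icc 0 pl, D q = D pl) (hpos : 0 ≤ D pl)
    (hconc : ConcaveOn ℝ (Icc pl pb) fun q => q * D q) (hp : p ∈ Icc pl pb)
    (hmax : IsMaxOn (fun q => q * D q) (Icc pl pb) p) :
    MonotoneOn (fun q => q * D q) (Icc 0 p) := by
  have hflat : MonotoneOn (fun q => q * D q) (Icc 0 pl) := by
    intro x hx y hy hxy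
    simp only [hconst x hx, hconst y hy]
    exact mul_le_mul_of_nonneg_right hxy hpos
  have hpeak : MonotoneOn (fun q => q * D q) (Icc pl p) :=
    (hconc.monotoneOn_of_isMaxOn hp hmax).mono fun x hx => ⟨⟨hx.1, hx.2.trans hp.2⟩, hx.2⟩
  rw [← Icc_union_Icc_eq_Icc hpl hp.1]
  exact hflat.union_right hpeak (isGreatest_Icc hpl) (isLeast_Icc hp.1)

/-- `R_μ`, with `f = R_L` and `g = R_H`. -/
def aggregateRevenue (f g : ℝ → ℝ) (μ q : ℝ) : ℝ := (1 - μ) * f q + μ * g q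

namespace aggregateRevenue

variable {f g : ℝ → ℝ} {a b c μ ν q : ℝ}

theorem continuous_weight (f g : ℝ → ℝ) (q : ℝ) :
    Continuous fun μ => aggregateRevenue f g μ q := by
  unfold aggregateRevenue
  fun_prop

theorem mem_Icc_union_of_isMaxOn (hf : ∀ q ∈ Ici 0, q ≠ a → f q < f a)
    (hg : ∀ q ∈ Ici 0, q ≠ b → g q < g b) (hfc : ∀ q ∈ Ici c, f q = 0)
    (hgmono : MonotoneOn g (Icc 0 b)) (ha : 0 ≤ a) (hac : a ≤ c) (hcb : c ≤ b)
    (hμ : μ ∈ Icc 0 1) (hq : 0 ≤ q) (hmax : IsMaxOn (aggregateRevenue f g μ) (Ici 0) q) :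
    q ∈ Icc a c ∪ {b} := by
  have hab : a ≤ b := hac.trans hcb
  have hb : 0 ≤ b := ha.trans hab
  have beats (p : ℝ) (hp : 0 ≤ p) (hlt : aggregateRevenue f g μ q < aggregateRevenue f g μ p) :
      False := (hmax (mem_Ici.2 hp)).not_gt hlt
  rcases hμ.1.eq_or_lt with rfl | hμ0
  · have hqa : q = a := by
      by_contra hqa
      exact beats a ha (by simpa [aggregateRevenue] using hf q hq hqa)
    exact Or.inl ⟨hqa.ge, hqa.le.trans hac⟩
  rcases hμ.2.lt_or_eq with hμ1 | rfl
  · by_contra hout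
    simp only [mem_union, mem_Icc, mem_singleton_iff, not_or, not_and_or, not_le] at hout
    obtain ⟨hqa | hcq, hqb⟩ := hout
    · have hfq := hf q hq hqa.ne
      have hgq := hgmono ⟨hq, hqa.le.trans hab⟩ ⟨ha, hab⟩ hqa.le
      refine beats a ha ?_
      unfold aggregateRevenue
      nlinarith [mul_le_mul_of_nonneg_left hgq hμ0.le]
    · have hgq := hg q hq hqb
      have hfq : f q = f b := by rw [hfc q hcq.le, hfc b hcb]
      refine beats b hb ?_
      unfold aggregateRevenue
      rw [hfq]
      nlinarith
  · refine Or.inr (by_contra fun hqb => beats b hb ?_)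
    simpa [aggregateRevenue] using hg q hq hqb

theorem lt_of_isMaxOn_of_lt (hg : ∀ q ∈ Ici 0, q ≠ b → g q < g b) (hfb : f b = 0)
    (hmax : IsMaxOn (aggregateRevenue f g μ) (Ici 0) b) (hμν : μ < ν) (hν : ν ≤ 1)
    (hq : 0 ≤ q) (hqb : q ≠ b) : aggregateRevenue f g ν q < aggregateRevenue f g ν b := by
  have hμq := isMaxOn_iff.1 hmax q hq
  have hgq := hg q hq hqb
  unfold aggregateRevenue at *
  rw [hfb] at *
  nlinarith

theorem isMaxOn_of_isMaxOn_of_le (hg : ∀ q ∈ Ici 0, q ≠ b → g q < g b) (hfb : f b = 0)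
    (hmax : IsMaxOn (aggregateRevenue f g μ) (Ici 0) b) (hμν : μ ≤ ν) (hν : ν ≤ 1) :
    IsMaxOn (aggregateRevenue f g ν) (Ici 0) b := by
  rcases hμν.eq_or_lt with rfl | hμν
  · exact hmax
  · exact isMaxOn_of_forall_ne_lt fun q hq hqb => lt_of_isMaxOn_of_lt hg hfb hmax hμν hν hq hqb

theorem pos_of_isMaxOn (hfab : f b < f a) (hgab : g a ≤ g b) (ha : 0 ≤ a)
    (hmax : IsMaxOn (aggregateRevenue f g μ) (Ici 0) b) : 0 < μ := by
  have h := isMaxOn_iff.1 hmax a ha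
  unfold aggregateRevenue at h
  by_contra! hμ
  nlinarith

theorem exists_lt_one_isMaxOn (hf : ∀ q ∈ Ici 0, q ≠ a → f q < f a)
    (hg : ∀ q ∈ Ici 0, q ≠ b → g q < g b) (hfc : ∀ q ∈ Ici c, f q = 0)
    (hgmono : MonotoneOn g (Icc 0 b)) (ha : 0 ≤ a) (hac : a ≤ c) (hcb : c < b) :
    ∃ μ < 1, IsMaxOn (aggregateRevenue f g μ) (Ici 0) b := by
  have hc : 0 ≤ c := ha.trans hac
  have hfb : f b = 0 := hfc b hcb.le
  have hfa : 0 < f a := hfb ▸ hf b (hc.trans hcb.le) (hac.trans_lt hcb).ne'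
  have hgc : 0 < g b - g c := sub_pos.2 (hg c hc hcb.ne)
  -- `μ` balances the best low-market revenue against the high market's loss at `p̄_L`
  set μ := f a / (f a + (g b - g c)) with hμ_def
  have hden : 0 < f a + (g b - g c) := by positivity
  have hμ0 : 0 ≤ μ := by positivity
  have hμ1 : μ < 1 := (div_lt_one hden).2 (by linarith)
  have hbalance : (1 - μ) * f a = μ * (g b - g c) := by
    rw [hμ_def]
    field_simp
    ring
  refine ⟨μ, hμ1, isMaxOn_iff.2 fun q (hq : 0 ≤ q) => ?_⟩
  unfold aggregateRevenue
  rw [hfb]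
  rcases le_or_gt q c with hqc | hcq
  · have hfq : f q ≤ f a := isMaxOn_of_forall_ne_lt hf hq
    have hgq : g q ≤ g c := hgmono ⟨hq, hqc.trans hcb.le⟩ ⟨hc, hcb.le⟩ hqc
    nlinarith [mul_le_mul_of_nonneg_left hfq (sub_nonneg.2 hμ1.le),
      mul_le_mul_of_nonneg_left hgq hμ0]
  · have hgq : g q ≤ g b := isMaxOn_of_forall_ne_lt hg hq
    rw [hfc q hcq.le]
    nlinarith [mul_le_mul_of_nonneg_left hgq hμ0]

theorem exists_threshold (hf : ∀ q ∈ Ici 0, q ≠ a → f q < f a)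
    (hg : ∀ q ∈ Ici 0, q ≠ b → g q < g b) (hfc : ∀ q ∈ Ici c, f q = 0)
    (hgmono : MonotoneOn g (Icc 0 b)) (ha : 0 ≤ a) (hac : a ≤ c) (hcb : c < b) :
    ∃ μhat ∈ Ioo 0 1,
      (∀ μ ∈ Icc 0 1, IsMaxOn (aggregateRevenue f g μ) (Ici 0) b ↔ μhat ≤ μ) ∧
      ∀ μ ∈ Icc 0 1, μhat < μ → ∀ q ∈ Ici 0, q ≠ b →
        aggregateRevenue f g μ q < aggregateRevenue f g μ b := by
  have hfb : f b = 0 := hfc b hcb.le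
  have hab : a < b := hac.trans_lt hcb
  have hpos {μ : ℝ} (hmax : IsMaxOn (aggregateRevenue f g μ) (Ici 0) b) : 0 < μ :=
    pos_of_isMaxOn (hfb ▸ hf b (ha.trans hab.le) hab.ne') (hg a ha hab.ne).le ha hmax
  set S := {μ | IsMaxOn (aggregateRevenue f g μ) (Ici 0) b}
  obtain ⟨μ₀, hμ₀1, hμ₀⟩ := exists_lt_one_isMaxOn hf hg hfc hgmono ha hac hcb
  have hbdd : BddBelow S := ⟨0, fun μ hμ => (hpos hμ).le⟩
  have hmem : sInf S ∈ S :=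
    (isClosed_setOf_isMaxOn (continuous_weight f g)).csInf_mem ⟨μ₀, hμ₀⟩ hbdd
  refine ⟨sInf S, ⟨hpos hmem, (csInf_le hbdd hμ₀).trans_lt hμ₀1⟩, fun μ hμ => ⟨?_, ?_⟩, ?_⟩
  · exact fun hmax => csInf_le hbdd hmax
  · exact fun hle => isMaxOn_of_isMaxOn_of_le hg hfb hmem hle hμ.2
  · exact fun μ hμ hlt q hq hqb => lt_of_isMaxOn_of_lt hg hfb hmem hlt hμ.2 hq hqb

end aggregateRevenue

theorem stmt_17_general
    (plL pbL plH pbH pLs pHs : ℝ)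
    (DL DH RL RH : ℝ → ℝ)
    (hRL : RL = fun q => q * DL q) (hRH : RH = fun q => q * DH q)
    (h0L : 0 < plL)
    (hDL0 : ∀ q ∈ Set.Ici pbL, DL q = 0)
    (hpLs : pLs ∈ Set.Ioo plL pbL)
    (hRLmax : ∀ q ∈ Set.Ici (0:ℝ), q ≠ pLs → RL q < RL pLs)
    (h0H : 0 < plH)
    (hDHconst : ∀ q ∈ Set.Icc (0:ℝ) plH, DH q = DH plH)
    (hDHpos0 : 0 < DH plH)
    (hRHconc : StrictConcaveOn ℝ (Set.Icc plH pbH) RH)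
    (hpHs : pHs ∈ Set.Ioo plH pbH)
    (hRHmax : ∀ q ∈ Set.Ici (0:ℝ), q ≠ pHs → RH q < RH pHs)
    (hexcl : pbL < pHs) :
    (∀ μ ∈ Set.Icc (0:ℝ) 1, ∀ q ∈ Set.Ici (0:ℝ),
      (∀ q' ∈ Set.Ici (0:ℝ),
        (1 - μ) * RL q' + μ * RH q' ≤ (1 - μ) * RL q + μ * RH q) →
      q ∈ Set.Icc pLs pbL ∪ {pHs}) ∧
    ∃ μhat ∈ Set.Ioo (0:ℝ) 1,
      (∀ μ ∈ Set.Icc (0:ℝ) 1,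
        ((∀ q' ∈ Set.Ici (0:ℝ),
          (1 - μ) * RL q' + μ * RH q' ≤ (1 - μ) * RL pHs + μ * RH pHs) ↔ μhat ≤ μ)) ∧
      (∀ μ ∈ Set.Icc (0:ℝ) 1, μhat < μ →
        ∀ q ∈ Set.Ici (0:ℝ), q ≠ pHs →
          (1 - μ) * RL q + μ * RH q < (1 - μ) * RL pHs + μ * RH pHs) := by
  have hpLs0 : 0 ≤ pLs := h0L.le.trans hpLs.1.le
  have hRLzero : ∀ q ∈ Ici pbL, RL q = 0 := fun q hq => by simp [hRL, hDL0 q hq]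
  have hRHmono : MonotoneOn RH (Icc 0 pHs) := by
    have hpeak : IsMaxOn RH (Icc plH pbH) pHs :=
      (isMaxOn_of_forall_ne_lt hRHmax).on_subset fun q hq => h0H.le.trans hq.1
    subst hRH
    exact monotoneOn_revenue_Icc_zero h0H.le hDHconst hDHpos0.le hRHconc.concaveOn
      ⟨hpHs.1.le, hpHs.2.le⟩ hpeak
  exact ⟨fun μ hμ q hq hmax => aggregateRevenue.mem_Icc_union_of_isMaxOn hRLmax hRHmax hRLzero
      hRHmono hpLs0 hpLs.2.le hexcl.le hμ hq (isMaxOn_iff.2 hmax),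
    aggregateRevenue.exists_threshold hRLmax hRHmax hRLzero hRHmono hpLs0 hpLs.2.le hexcl⟩

/-- (Full exclusion: optimal prices and the opening-new-markets threshold.)
In the full-exclusion binary model: (i) every maximizer of the aggregate revenue
`R_μ = (1−μ)R_L + μR_H` over `[0,∞)` lies in `[p_L*, p̄_L] ∪ {p_H*}`; (ii) there is a
threshold `μ̂ ∈ (0,1)` such that `p_H*` is a maximizer iff `μ ≥ μ̂`, and the unique
maximizer for `μ > μ̂`. -/
theorem stmt_17
    (plL pbL plH pbH pLs pHs : ℝ)
    (DL DH RL RH : ℝ → ℝ)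
    (hRL : RL = fun q => q * DL q) (hRH : RH = fun q => q * DH q)
    (h0L : 0 < plL) (hL : plL < pbL)
    (hDLcont : ContinuousOn DL (Set.Ici 0))
    (hDLconst : ∀ q ∈ Set.Icc (0:ℝ) plL, DL q = DL plL)
    (hDLpos0 : 0 < DL plL)
    (hDLC1 : ContDiffOn ℝ 1 DL (Set.Ioo plL pbL))
    (hDLpos : ∀ q ∈ Set.Ioo plL pbL, 0 < DL q)
    (hDL' : ∀ q ∈ Set.Ioo plL pbL, deriv DL q < 0)
    (hDL0 : ∀ q ∈ Set.Ici pbL, DL q = 0)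
    (hRLconc : StrictConcaveOn ℝ (Set.Icc plL pbL) RL)
    (hpLs : pLs ∈ Set.Ioo plL pbL)
    (hRLmax : ∀ q ∈ Set.Ici (0:ℝ), q ≠ pLs → RL q < RL pLs)
    (h0H : 0 < plH) (hH : plH < pbH)
    (hDHcont : ContinuousOn DH (Set.Ici 0))
    (hDHconst : ∀ q ∈ Set.Icc (0:ℝ) plH, DH q = DH plH)
    (hDHpos0 : 0 < DH plH)
    (hDHC1 : ContDiffOn ℝ 1 DH (Set.Ioo plH pbH))
    (hDHpos : ∀ q ∈ Set.Ioo plH pbH, 0 < DH q)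
    (hDH' : ∀ q ∈ Set.Ioo plH pbH, deriv DH q < 0)
    (hDH0 : ∀ q ∈ Set.Ici pbH, DH q = 0)
    (hRHconc : StrictConcaveOn ℝ (Set.Icc plH pbH) RH)
    (hpHs : pHs ∈ Set.Ioo plH pbH)
    (hRHmax : ∀ q ∈ Set.Ici (0:ℝ), q ≠ pHs → RH q < RH pHs)
    (hexcl : pbL < pHs) :
    (∀ μ ∈ Set.Icc (0:ℝ) 1, ∀ q ∈ Set.Ici (0:ℝ),
      (∀ q' ∈ Set.Ici (0:ℝ),
        (1 - μ) * RL q' + μ * RH q' ≤ (1 - μ) * RL q + μ * RH q) →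
      q ∈ Set.Icc pLs pbL ∪ {pHs}) ∧
    ∃ μhat ∈ Set.Ioo (0:ℝ) 1,
      (∀ μ ∈ Set.Icc (0:ℝ) 1,
        ((∀ q' ∈ Set.Ici (0:ℝ),
          (1 - μ) * RL q' + μ * RH q' ≤ (1 - μ) * RL pHs + μ * RH pHs) ↔ μhat ≤ μ)) ∧
      (∀ μ ∈ Set.Icc (0:ℝ) 1, μhat < μ →
        ∀ q ∈ Set.Ici (0:ℝ), q ≠ pHs →
          (1 - μ) * RL q + μ * RH q < (1 - μ) * RL pHs + μ * RH pHs) :=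
  stmt_17_general plL pbL plH pbH pLs pHs DL DH RL RH hRL hRH h0L hDL0 hpLs hRLmax h0H hDHconst
    hDHpos0 hRHconc hpHs hRHmax hexcl
end
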